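/- If ρ : S² → ℝ is continuous, axisymmetric (ρ(p) = f(p·e) for some e ∈ S² and continuous f : [−1,1] → ℝ), and has cubic symmetry (ρ(Qp) = ρ(p) for all Q in the cubic group P⁴⁸ and all p ∈ S²), then ρ is constant. -/

import Mathlib

/-- The cubic group `P⁴⁸` of signed permutation matrices. -/
def P48 : Set (Matrix (Fin 3) (Fin 3) ℝ) :=
  {Q | ∃ (σ : Equiv.Perm (Fin 3)) (ε : Fin 3 → ℝ), (∀ i, ε i = 1 ∨ ε i = -1) ∧
    ∀ i j, Q i j = if j = σ i then ε i else 0}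

/-!
Pick `M ∈ P⁴⁸` with `M e ≠ ±e`, so that `c = ⟪e, M e⟫` satisfies `|c| < 1`. For `u ∈ [-1, 1]`
take the unit vector `p = u e + √(1 - u²) w` with `w ⊥ e, M e`; then `⟪p, e⟫ = u`,
`⟪p, M e⟫ = c u`, and cubic symmetry gives `f u = ρ p = ρ (Mᵀ p) = f ⟪p, M e⟫ = f (c u)`.
Iterating, `f u = f (cⁿ u) → f 0` by continuity of `f` at `0`, so `f` is constant on `[-1, 1]`.
-/

open scoped RealInnerProductSpace
open Matrix Filter Topology

theorem apply_eq_apply_zero_of_apply_mul_eq {𝕜 α : Type*} [SeminormedRing 𝕜] [TopologicalSpace α]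
    [T2Space α] {f : 𝕜 → α} {s : Set 𝕜} {c : 𝕜} (hc : ‖c‖ < 1) (hs : ∀ u ∈ s, c * u ∈ s)
    (hf : ContinuousWithinAt f s 0) (hfc : ∀ u ∈ s, f (c * u) = f u) {u : 𝕜} (hu : u ∈ s) :
    f u = f 0 := by
  have hmem : ∀ n : ℕ, c ^ n * u ∈ s := fun n => by
    induction n with
    | zero => simpa
    | succ n ih => simpa [pow_succ', mul_assoc] using hs _ ih
  have hiter : ∀ n : ℕ, f (c ^ n * u) = f u := fun n => by
    induction n with
    | zero => simp
    | succ n ih => rw [pow_succ', mul_assoc, hfc _ (hmem n), ih]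
  have htend : Tendsto (fun n : ℕ => c ^ n * u) atTop (𝓝[s] 0) :=
    tendsto_nhdsWithin_iff.2
      ⟨by simpa using (tendsto_pow_atTop_nhds_zero_of_norm_lt_one hc).mul_const u,
        Eventually.of_forall hmem⟩
  refine tendsto_nhds_unique ?_ (hf.tendsto.comp htend)
  simp only [Function.comp_def, hiter, tendsto_const_nhds]

section InnerProductSpace

variable {E : Type*} [NormedAddCommGroup E] [InnerProductSpace ℝ E]

theorem abs_real_inner_lt_one_of_ne {x y : E} (hx : ‖x‖ = 1) (hy : ‖y‖ = 1) (h₁ : x ≠ y)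
    (h₂ : x ≠ -y) : |⟪x, y⟫| < 1 :=
  abs_lt.2 ⟨(neg_one_le_real_inner_of_norm_eq_one hx hy).lt_of_ne
      fun h => h₂ ((inner_eq_neg_one_iff_of_norm_eq_one hx hy).1 h.symm),
    (real_inner_le_one_of_norm_eq_one hx hy).lt_of_ne
      fun h => h₁ ((inner_eq_one_iff_of_norm_eq_one hx hy).1 h)⟩

variable [FiniteDimensional ℝ E]

theorem exists_norm_eq_one_inner_eq_zero_inner_eq_zero (hE : 2 < Module.finrank ℝ E) (x y : E) :
    ∃ w : E, ‖w‖ = 1 ∧ ⟪w, x⟫ = 0 ∧ ⟪w, y⟫ = 0 := by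
  classical
  set K := Submodule.span ℝ ({x, y} : Set E)
  have hK2 : Module.finrank ℝ K ≤ 2 :=
    (finrank_span_le_card (R := ℝ) ({x, y} : Set E)).trans (by simpa using Finset.card_le_two)
  have hK : K ≠ ⊤ := fun hK => by
    rw [hK, finrank_top] at hK2
    omega
  obtain ⟨w, hwK, hw⟩ := Submodule.exists_mem_ne_zero_of_ne_bot
    ((Submodule.orthogonal_eq_bot_iff (K := K)).not.2 hK)
  have horth : ∀ v ∈ ({x, y} : Set E), ⟪w, v⟫ = 0 := fun v hv =>
    (Submodule.mem_orthogonal' K w).1 hwK v (Submodule.subset_span hv)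
  refine ⟨‖w‖⁻¹ • w, norm_smul_inv_norm hw, ?_, ?_⟩ <;>
    simp [real_inner_smul_left, horth]

theorem exists_norm_eq_one_inner_eq (hE : 2 < Module.finrank ℝ E) {e : E} (he : ‖e‖ = 1)
    (e' : E) {u : ℝ} (hu : u ∈ Set.Icc (-1) 1) :
    ∃ p : E, ‖p‖ = 1 ∧ ⟪p, e⟫ = u ∧ ⟪p, e'⟫ = u * ⟪e, e'⟫ := by
  obtain ⟨w, hw, hwe, hwe'⟩ := exists_norm_eq_one_inner_eq_zero_inner_eq_zero hE e e'
  have hu2 : 0 ≤ 1 - u ^ 2 := by nlinarith [hu.1, hu.2]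
  set p := u • e + √(1 - u ^ 2) • w
  have hpe : ⟪p, e⟫ = u := by
    simp [p, inner_add_left, real_inner_smul_left, he, hwe]
  have hew : ⟪e, w⟫ = 0 := by rwa [real_inner_comm]
  have hp : ‖p‖ ^ 2 = 1 := by
    simp only [p, norm_add_sq_real, real_inner_smul_left, real_inner_smul_right, hew, norm_smul,
      Real.norm_eq_abs, mul_pow, sq_abs, he, hw, Real.sq_sqrt hu2]
    ring
  refine ⟨p, (pow_eq_one_iff_of_nonneg (norm_nonneg p) two_ne_zero).1 hp, hpe, ?_⟩
  simp [p, inner_add_left, real_inner_smul_left, hwe']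

end InnerProductSpace

theorem inner_toLp_mulVec {m n : Type*} [Fintype m] [Fintype n] (A : Matrix m n ℝ)
    (x : EuclideanSpace ℝ n) (y : EuclideanSpace ℝ m) :
    ⟪WithLp.toLp 2 (A *ᵥ x), y⟫ = ⟪x, WithLp.toLp 2 (Aᵀ *ᵥ y)⟫ := by
  simp only [EuclideanSpace.inner_eq_star_dotProduct, star_trivial]
  rw [mulVec_transpose, dotProduct_mulVec]

namespace P48

def signedPerm (σ : Equiv.Perm (Fin 3)) (ε : Fin 3 → ℝ) : Matrix (Fin 3) (Fin 3) ℝ :=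
  Matrix.of fun i j => if j = σ i then ε i else 0

theorem mem_iff {Q : Matrix (Fin 3) (Fin 3) ℝ} :
    Q ∈ P48 ↔ ∃ σ ε, (∀ i, ε i = 1 ∨ ε i = -1) ∧ Q = signedPerm σ ε := by
  simp only [P48, Set.mem_ofPred_eq, ← Matrix.ext_iff, signedPerm, Matrix.of_apply]

theorem signedPerm_mulVec (σ : Equiv.Perm (Fin 3)) (ε p : Fin 3 → ℝ) :
    signedPerm σ ε *ᵥ p = fun i => ε i * p (σ i) := by
  ext i
  simp [signedPerm, mulVec, dotProduct]

theorem transpose_mem {Q : Matrix (Fin 3) (Fin 3) ℝ} (hQ : Q ∈ P48) : Qᵀ ∈ P48 := by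
  obtain ⟨σ, ε, hε, rfl⟩ := mem_iff.1 hQ
  refine mem_iff.2 ⟨σ⁻¹, fun i => ε (σ⁻¹ i), fun i => hε _, ?_⟩
  ext i j
  simp only [signedPerm, transpose_apply, of_apply, Equiv.Perm.inv_def, Equiv.eq_symm_apply]
  split_ifs with h <;> simp_all [eq_comm]

theorem norm_toLp_mulVec {Q : Matrix (Fin 3) (Fin 3) ℝ} (hQ : Q ∈ P48)
    (p : EuclideanSpace ℝ (Fin 3)) : ‖WithLp.toLp 2 (Q *ᵥ p)‖ = ‖p‖ := by
  obtain ⟨σ, ε, hε, rfl⟩ := mem_iff.1 hQ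
  simp only [EuclideanSpace.norm_eq, signedPerm_mulVec, Real.norm_eq_abs, sq_abs]
  congr 1
  rw [← Equiv.sum_comp σ (fun j => p j ^ 2)]
  refine Finset.sum_congr rfl fun i _ => ?_
  rcases hε i with h | h <;> simp [h]

theorem exists_mulVec_ne {e : Fin 3 → ℝ} (he : e ≠ 0) :
    ∃ M ∈ P48, M *ᵥ e ≠ e ∧ M *ᵥ e ≠ -e := by
  obtain ⟨i, hi⟩ : ∃ i, e i ≠ 0 := by
    by_contra! h
    exact he (funext h)
  by_cases h : ∃ j ≠ i, e j ≠ 0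
  · obtain ⟨j, hji, hj⟩ := h
    refine ⟨signedPerm 1 fun k => if k = i then -1 else 1,
      mem_iff.2 ⟨_, _, fun k => by split_ifs <;> simp, rfl⟩, fun h => ?_, fun h => ?_⟩
    · have := congrFun h i
      simp only [signedPerm_mulVec, ↓reduceIte, Equiv.Perm.coe_one, id_eq, neg_mul, one_mul] at this
      exact hi (by linarith)
    · have := congrFun h j
      simp only [signedPerm_mulVec, hji, ↓reduceIte, Equiv.Perm.coe_one, id_eq, one_mul,
        Pi.neg_apply] at this
      exact hj (by linarith)
  · push Not at h
    have hi1 : i + 1 ≠ i := by fin_cases i <;> decide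
    refine ⟨signedPerm (Equiv.swap i (i + 1)) 1, mem_iff.2 ⟨_, _, fun k => Or.inl rfl, rfl⟩,
      fun h' => ?_, fun h' => ?_⟩ <;>
    · exact hi (by simpa [signedPerm_mulVec, h _ hi1] using congrFun h' (i + 1))

end P48

theorem apply_inner_mul_eq_of_P48_invariant {ρ : EuclideanSpace ℝ (Fin 3) → ℝ}
    {e : EuclideanSpace ℝ (Fin 3)} (he : ‖e‖ = 1) {f : ℝ → ℝ}
    (haxi : ∀ p ∈ Metric.sphere (0 : EuclideanSpace ℝ (Fin 3)) 1, ρ p = f ⟪p, e⟫)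
    (hcubic : ∀ Q ∈ P48, ∀ p ∈ Metric.sphere (0 : EuclideanSpace ℝ (Fin 3)) 1,
      ρ (WithLp.toLp 2 (Q *ᵥ p)) = ρ p)
    {M : Matrix (Fin 3) (Fin 3) ℝ} (hM : M ∈ P48) {u : ℝ} (hu : u ∈ Set.Icc (-1) 1) :
    f (⟪e, WithLp.toLp 2 (M *ᵥ e)⟫ * u) = f u := by
  obtain ⟨p, hp, hpe, hpMe⟩ :=
    exists_norm_eq_one_inner_eq (by simp) he (WithLp.toLp 2 (M *ᵥ e)) hu
  have hpS : p ∈ Metric.sphere 0 1 := mem_sphere_zero_iff_norm.2 hp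
  have hMpS : WithLp.toLp 2 (Mᵀ *ᵥ p) ∈ Metric.sphere (0 : EuclideanSpace ℝ (Fin 3)) 1 :=
    mem_sphere_zero_iff_norm.2 ((P48.norm_toLp_mulVec (P48.transpose_mem hM) p).trans hp)
  calc f (⟪e, WithLp.toLp 2 (M *ᵥ e)⟫ * u)
      = f ⟪WithLp.toLp 2 (Mᵀ *ᵥ p), e⟫ := by
        rw [inner_toLp_mulVec, transpose_transpose, hpMe, mul_comm]
    _ = ρ (WithLp.toLp 2 (Mᵀ *ᵥ p)) := (haxi _ hMpS).symm
    _ = ρ p := hcubic _ (P48.transpose_mem hM) p hpS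
    _ = f u := by rw [haxi p hpS, hpe]

theorem axisym_cubic_const (ρ : EuclideanSpace ℝ (Fin 3) → ℝ)
    (e : EuclideanSpace ℝ (Fin 3)) (he : ‖e‖ = 1)
    (f : ℝ → ℝ) (hf : ContinuousOn f (Set.Icc (-1) 1))
    (haxi : ∀ p ∈ Metric.sphere (0 : EuclideanSpace ℝ (Fin 3)) 1, ρ p = f (inner ℝ p e))
    (hcubic : ∀ Q ∈ P48, ∀ p ∈ Metric.sphere (0 : EuclideanSpace ℝ (Fin 3)) 1,
      ρ (WithLp.toLp 2 (Q.mulVec p) : EuclideanSpace ℝ (Fin 3)) = ρ p) :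
    ∀ p ∈ Metric.sphere (0 : EuclideanSpace ℝ (Fin 3)) 1,
      ∀ q ∈ Metric.sphere (0 : EuclideanSpace ℝ (Fin 3)) 1, ρ p = ρ q := by
  have he0 : WithLp.ofLp e ≠ 0 :=
    (WithLp.ofLp_eq_zero 2).ne.2 (ne_zero_of_norm_ne_zero (by simp [he]))
  obtain ⟨M, hM, hMe, hMe'⟩ := P48.exists_mulVec_ne he0
  set c := ⟪e, WithLp.toLp 2 (M *ᵥ e)⟫
  have hc : |c| < 1 :=
    abs_real_inner_lt_one_of_ne he ((P48.norm_toLp_mulVec hM e).trans he)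
      (fun h => hMe (congrArg WithLp.ofLp h).symm)
      (fun h => hMe' (congrArg WithLp.ofLp (neg_eq_iff_eq_neg.1 h.symm)))
  have hIcc : ∀ u ∈ Set.Icc (-1 : ℝ) 1, c * u ∈ Set.Icc (-1) 1 := fun u hu => by
    rw [Set.mem_Icc, ← abs_le] at hu ⊢
    rw [abs_mul]
    exact mul_le_one₀ hc.le (abs_nonneg u) hu
  have hflat : ∀ u ∈ Set.Icc (-1 : ℝ) 1, f u = f 0 := fun u =>
    apply_eq_apply_zero_of_apply_mul_eq hc hIcc (hf 0 (by norm_num))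
      fun _ => apply_inner_mul_eq_of_P48_invariant he haxi hcubic hM
  intro p hp q hq
  rw [haxi p hp, haxi q hq, hflat _ (real_inner_mem_Icc_of_norm_eq_one (by simpa using hp) he),
    hflat _ (real_inner_mem_Icc_of_norm_eq_one (by simpa using hq) he)]
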